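/- arXiv:2512.24337 — 6 statements merged into one kernel-verified Lean document; each statement's English description precedes it below -/
import Mathlib

section
/- Let x : ℤ → {0,1} and define y_i = f156(x_{i−1}, x_i, x_{i+1}). Then for every n ≥ 2, the product ∏_{i=0}^{n} y_i equals ∏_{i=0}^{n+1} x_i. -/
/-
A product of `0`/`1` values is `1` if all factors are `1` and `0` otherwise, so it suffices to show
that all `y i` (`0 ≤ i ≤ n`) equal `1` exactly when all `x i` (`0 ≤ i ≤ n + 1`) do. Since
`f156 a 1 1 = 1`, a block of ones in `x` produces ones in `y`. Conversely, on binary inputs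
`f156 a b c = 1` and `f156 b c d = 1` force `b = 1`, which gives `x i = 1` for `0 ≤ i ≤ n - 1`; then
`f156 1 1 c = c` recovers `x n` from `y (n - 1)` (this needs `n ≥ 2`) and `x (n + 1)` from `y n`.
-/

/-- Polynomial form of the local function of rule 156. -/
def f156 (a b c : ℤ) : ℤ := (1 - a) * b + a * b * c + a * (1 - b) * (1 - c)

open Finset

section BinaryProducts

variable {ι κ : Type*}

theorem prod_eq_ite_of_binary (s : Finset ι) {f : ι → ℤ} (hf : ∀ i ∈ s, f i = 0 ∨ f i = 1) :
    ∏ i ∈ s, f i = if ∀ i ∈ s, f i = 1 then 1 else 0 := by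
  split_ifs with h
  · exact prod_eq_one h
  · push Not at h
    obtain ⟨i, hi, hne⟩ := h
    exact prod_eq_zero hi ((hf i hi).resolve_right hne)

theorem prod_eq_prod_of_binary {s : Finset ι} {t : Finset κ} {f : ι → ℤ} {g : κ → ℤ}
    (hf : ∀ i ∈ s, f i = 0 ∨ f i = 1) (hg : ∀ j ∈ t, g j = 0 ∨ g j = 1)
    (h : (∀ i ∈ s, f i = 1) ↔ ∀ j ∈ t, g j = 1) :
    ∏ i ∈ s, f i = ∏ j ∈ t, g j := by
  rw [prod_eq_ite_of_binary s hf, prod_eq_ite_of_binary t hg]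
  exact if_congr h rfl rfl

end BinaryProducts

section Rule156

variable {a b c d : ℤ}

theorem f156_binary (ha : a = 0 ∨ a = 1) (hb : b = 0 ∨ b = 1) (hc : c = 0 ∨ c = 1) :
    f156 a b c = 0 ∨ f156 a b c = 1 := by
  rcases ha with rfl | rfl <;> rcases hb with rfl | rfl <;> rcases hc with rfl | rfl <;>
    simp [f156]

theorem eq_one_of_f156_eq_one_of_f156_eq_one (ha : a = 0 ∨ a = 1) (hb : b = 0 ∨ b = 1)
    (hc : c = 0 ∨ c = 1) (hd : d = 0 ∨ d = 1) (h₁ : f156 a b c = 1) (h₂ : f156 b c d = 1) :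
    b = 1 := by
  rcases ha with rfl | rfl <;> rcases hb with rfl | rfl <;> rcases hc with rfl | rfl <;>
    rcases hd with rfl | rfl <;> simp_all [f156]

@[simp] theorem f156_one_one_left (c : ℤ) : f156 1 1 c = c := by simp [f156]

@[simp] theorem f156_one_one_right (a : ℤ) : f156 a 1 1 = 1 := by simp [f156]

theorem forall_f156_eq_one_iff {x : ℤ → ℤ} (hx : ∀ i, x i = 0 ∨ x i = 1) {n : ℤ} (hn : 2 ≤ n) :
    (∀ i ∈ Icc 0 n, f156 (x (i - 1)) (x i) (x (i + 1)) = 1) ↔ ∀ i ∈ Icc 0 (n + 1), x i = 1 := by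
  simp only [mem_Icc]
  constructor
  · intro hy
    have hlow : ∀ i, 0 ≤ i → i ≤ n - 1 → x i = 1 := fun i h₀ h₁ ↦
      eq_one_of_f156_eq_one_of_f156_eq_one (hx _) (hx _) (hx _) (hx (i + 2)) (hy i ⟨h₀, by omega⟩)
        (by simpa [add_assoc] using hy (i + 1) ⟨by omega, by omega⟩)
    have hn_eq : x n = 1 := by
      simpa [hlow (n - 1 - 1) (by omega) (by omega), hlow (n - 1) (by omega) (by omega)]
        using hy (n - 1) ⟨by omega, by omega⟩
    have hsucc_eq : x (n + 1) = 1 := by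
      simpa [hlow (n - 1) (by omega) (by omega), hn_eq] using hy n ⟨by omega, le_rfl⟩
    intro i ⟨h₀, h₁⟩
    rcases lt_trichotomy i n with hi | rfl | hi
    · exact hlow i h₀ (by omega)
    · exact hn_eq
    · rwa [show i = n + 1 by omega]
  · intro hx1 i ⟨h₀, h₁⟩
    rw [hx1 i ⟨h₀, by omega⟩, hx1 (i + 1) ⟨by omega, by omega⟩, f156_one_one_right]

end Rule156

theorem stmt3 (x : ℤ → ℤ) (hx : ∀ i, x i = 0 ∨ x i = 1)
    (y : ℤ → ℤ) (hy : ∀ i, y i = f156 (x (i - 1)) (x i) (x (i + 1)))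
    (n : ℕ) (hn : 2 ≤ n) :
    ∏ i ∈ Finset.Icc (0 : ℤ) (n : ℤ), y i = ∏ i ∈ Finset.Icc (0 : ℤ) ((n : ℤ) + 1), x i := by
  have hy_binary : ∀ i ∈ Icc (0 : ℤ) n, y i = 0 ∨ y i = 1 := fun i _ ↦
    hy i ▸ f156_binary (hx _) (hx _) (hx _)
  refine prod_eq_prod_of_binary hy_binary (fun i _ ↦ hx i) ?_
  simp only [hy]
  exact forall_f156_eq_one_iff hx (n := n) (by exact_mod_cast hn)
end

section
/- Let x : ℤ → {0,1} and define y_i = f156(x_{i−1}, x_i, x_{i+1}). Then for every n ≥ 2, the product ∏_{i=0}^{n} (1 − y_i) equals ∏_{i=−1}^{n} (1 − x_i). -/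
/-!
Rule 156 copies the middle cell whenever the left cell is `0`, so a factor `1 - x (i - 1)` turns
`1 - y i` into `1 - x i`; this lets the identity propagate from `n` to `n + 1`. The case `n = 2`
is a finite check, in which a left boundary cell `x (-1) = 1` forces one of `y 0, y 1, y 2` to be `1`.
-/

open Finset

lemma Finset.prod_Icc_add_one_right {α M : Type*} [LinearOrder α] [One α] [LocallyFiniteOrder α]
    [Add α] [SuccAddOrder α] [NoMaxOrder α] [CommMonoid M] (f : α → M) {a b : α}
    (h : a ≤ b + 1) : ∏ i ∈ Icc a (b + 1), f i = f (b + 1) * ∏ i ∈ Icc a b, f i := by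
  rw [← insert_Icc_right_eq_Icc_add_one h, prod_insert (by simp)]

lemma Finset.mul_prod_eq_mul_prod_of_mul_eq {ι R : Type*} [CommMonoid R] [DecidableEq ι]
    {s : Finset ι} {f : ι → R} {i : ι} (hi : i ∈ s) {u v : R} (h : u * f i = v * f i) :
    u * ∏ j ∈ s, f j = v * ∏ j ∈ s, f j := by
  rw [← mul_prod_erase s f hi, ← mul_assoc, h, mul_assoc]

lemma one_sub_f156_mul_one_sub {a : ℤ} (ha : a = 0 ∨ a = 1) (b c : ℤ) :
    (1 - f156 a b c) * (1 - a) = (1 - b) * (1 - a) := by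
  rcases ha with rfl | rfl <;> simp [f156]

lemma prod_one_sub_f156_three {a b c d e : ℤ} (ha : a = 0 ∨ a = 1) (hb : b = 0 ∨ b = 1)
    (hc : c = 0 ∨ c = 1) (hd : d = 0 ∨ d = 1) (he : e = 0 ∨ e = 1) :
    (1 - f156 a b c) * ((1 - f156 b c d) * (1 - f156 c d e)) =
      (1 - a) * ((1 - b) * ((1 - c) * (1 - d))) := by
  rcases ha with rfl | rfl <;> rcases hb with rfl | rfl <;> rcases hc with rfl | rfl <;>
    rcases hd with rfl | rfl <;> rcases he with rfl | rfl <;> simp [f156]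

theorem stmt4 (x : ℤ → ℤ) (hx : ∀ i, x i = 0 ∨ x i = 1)
    (y : ℤ → ℤ) (hy : ∀ i, y i = f156 (x (i - 1)) (x i) (x (i + 1)))
    (n : ℕ) (hn : 2 ≤ n) :
    ∏ i ∈ Finset.Icc (0 : ℤ) (n : ℤ), (1 - y i) =
      ∏ i ∈ Finset.Icc (-1 : ℤ) (n : ℤ), (1 - x i) := by
  induction n, hn using Nat.le_induction with
  | base =>
    rw [show Icc (0 : ℤ) ((2 : ℕ) : ℤ) = {0, 1, 2} by decide,
      show Icc (-1 : ℤ) ((2 : ℕ) : ℤ) = {-1, 0, 1, 2} by decide]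
    norm_num [hy]
    exact prod_one_sub_f156_three (hx _) (hx _) (hx _) (hx _) (hx _)
  | succ n _ ih =>
    push_cast
    rw [prod_Icc_add_one_right _ (by omega), prod_Icc_add_one_right _ (by omega), ih, hy,
      add_sub_cancel_right]
    exact mul_prod_eq_mul_prod_of_mul_eq (by simp) (one_sub_f156_mul_one_sub (hx n) _ _)
end

section
/- Let x : ℤ → {0,1} and y_k = f156(x_{k−1},x_k,x_{k+1}). Then for every k, (1−y_k)·(1−y_{k+1}) = (1−x_{k−1})·(1−x_k)·(1−x_{k+1}) + x_{k−1}·x_k·(1−x_{k+1})·x_{k+2}. -/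
theorem stmt7 (x : ℤ → ℤ) (hx : ∀ i, x i = 0 ∨ x i = 1)
    (y : ℤ → ℤ) (hy : ∀ i, y i = f156 (x (i - 1)) (x i) (x (i + 1))) (k : ℤ) :
    (1 - y k) * (1 - y (k + 1)) =
      (1 - x (k - 1)) * (1 - x k) * (1 - x (k + 1)) +
        x (k - 1) * x k * (1 - x (k + 1)) * x (k + 2) := by
  have h1 := hy k
  have h2 := hy (k + 1)
  simp only [add_sub_cancel_right] at h2
  rw [show k + 1 + 1 = k + 2 by ring] at h2
  rw [h1, h2]
  rcases hx (k - 1) with h | h <;> rcases hx k with h' | h' <;>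
    rcases hx (k + 1) with h'' | h'' <;> rcases hx (k + 2) with h''' | h''' <;>
    simp [f156, h, h', h'', h''']
end

section
/- Define D(x,n,j) = x_{j−n} · ∏_{m=j−n+1}^{j+1} (1−x_m). Let x ∈ {0,1}^ℤ and y = F156(x). Then for all n ≥ 2 and j ∈ ℤ, D(y,n,j) = D(x,n+1,j). -/
/-- Diagonal-line term in the decomposition of the rule-156 pattern. -/
noncomputable def D (x : ℤ → ℤ) (n : ℕ) (j : ℤ) : ℤ :=
  x (j - n) * ∏ m ∈ Finset.Icc (j - n + 1) (j + 1), (1 - x m)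

/-
On `{0,1}`-sequences `D x n j` is the indicator of "a `1` at `j - n` followed by zeros up to `j + 1`".
Rule 156 copies `x i` when `x (i - 1) = 0` and tests `x i = x (i + 1)` when `x (i - 1) = 1`.
So zeros of `y` on `(k, l]` with `l ≥ k + 3` force `x` to vanish on `[k, l]`: a first `1` of `x`
inside `(k, l]` would be copied into `y`, and a `1` of `x` at `k` produces a `1` of `y` within
three steps. A `1` of `y` at `k` then has to come from `x (k - 1) = 1`, and conversely.
-/

open Finset

lemma prod_one_sub_eq_ite {ι : Type*} (s : Finset ι) (x : ι → ℤ)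
    (hx : ∀ i ∈ s, x i = 0 ∨ x i = 1) :
    ∏ i ∈ s, (1 - x i) = if ∀ i ∈ s, x i = 0 then 1 else 0 := by
  split_ifs with h
  · exact prod_eq_one fun i hi => by rw [h i hi, sub_zero]
  · obtain ⟨i, hi, hxi⟩ := not_forall₂.mp h
    exact prod_eq_zero hi (by rw [(hx i hi).resolve_left hxi, sub_self])

open Classical in
lemma D_eq_ite {x : ℤ → ℤ} (hx : ∀ i, x i = 0 ∨ x i = 1) (n : ℕ) (j : ℤ) :
    D x n j = if x (j - n) = 1 ∧ ∀ m ∈ Icc (j - n + 1) (j + 1), x m = 0 then 1 else 0 := by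
  rw [D, prod_one_sub_eq_ite _ _ fun i _ => hx i]
  rcases hx (j - n) with h | h <;> simp [h]

lemma f156_mem_zero_one {a b c : ℤ} (ha : a = 0 ∨ a = 1) (hb : b = 0 ∨ b = 1)
    (hc : c = 0 ∨ c = 1) : f156 a b c = 0 ∨ f156 a b c = 1 := by
  rcases ha with rfl | rfl <;> rcases hb with rfl | rfl <;> rcases hc with rfl | rfl <;>
    simp [f156]

section Rule156

variable {x y : ℤ → ℤ} (hy : ∀ i, y i = f156 (x (i - 1)) (x i) (x (i + 1)))
include hy

lemma rule156_of_prev_eq_zero {i : ℤ} (h : x (i - 1) = 0) : y i = x i := by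
  simp [hy, f156, h]

lemma rule156_eq_one_of_isolated {i : ℤ} (hl : x (i - 1) = 1) (h : x i = 0)
    (hr : x (i + 1) = 0) : y i = 1 := by
  simp [hy, f156, hl, h, hr]

variable (hx : ∀ i, x i = 0 ∨ x i = 1)
include hx

lemma exists_rule156_eq_one_of_eq_one {m : ℤ} (h : x m = 1) :
    ∃ i ∈ Icc (m + 1) (m + 3), y i = 1 := by
  have y_succ : y (m + 1) = f156 1 (x (m + 1)) (x (m + 2)) := by
    rw [hy, add_sub_cancel_right, h, add_assoc]; norm_num
  have y_add_two : y (m + 2) = f156 (x (m + 1)) (x (m + 2)) (x (m + 3)) := by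
    rw [hy]; ring_nf
  have y_add_three : y (m + 3) = f156 (x (m + 2)) (x (m + 3)) (x (m + 4)) := by
    rw [hy]; ring_nf
  rcases hx (m + 1) with h1 | h1 <;> rcases hx (m + 2) with h2 | h2
  · exact ⟨m + 1, by simp, by simp [y_succ, h1, h2, f156]⟩
  · exact ⟨m + 2, mem_Icc.2 ⟨by omega, by omega⟩, by simp [y_add_two, h1, h2, f156]⟩
  · rcases hx (m + 3) with h3 | h3
    · exact ⟨m + 2, mem_Icc.2 ⟨by omega, by omega⟩, by simp [y_add_two, h1, h2, h3, f156]⟩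
    · exact ⟨m + 3, mem_Icc.2 ⟨by omega, le_rfl⟩, by simp [y_add_three, h2, h3, f156]⟩
  · exact ⟨m + 1, by simp, by simp [y_succ, h1, h2, f156]⟩

lemma eq_zero_of_rule156_eq_zero_on_Icc {k l : ℤ} (hkl : k + 3 ≤ l)
    (hy0 : ∀ m ∈ Icc (k + 1) l, y m = 0) : ∀ m ∈ Icc k l, x m = 0 := by
  suffices ∀ m, k ≤ m → m ≤ l → x m = 0 from fun m hm => this m (mem_Icc.1 hm).1 (mem_Icc.1 hm).2
  intro m hkm
  induction m, hkm using Int.leInduction with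
  | base =>
    refine fun _ => (hx k).resolve_right fun hxk => ?_
    obtain ⟨i, hi, hyi⟩ := exists_rule156_eq_one_of_eq_one hy hx hxk
    rw [hy0 i (mem_Icc.2 ⟨(mem_Icc.1 hi).1, by linarith [(mem_Icc.1 hi).2]⟩)] at hyi
    exact zero_ne_one hyi
  | succ m hkm ih =>
    intro hml
    rw [← rule156_of_prev_eq_zero hy (by rw [add_sub_cancel_right]; exact ih (by omega))]
    exact hy0 (m + 1) (mem_Icc.2 ⟨by omega, hml⟩)

lemma rule156_run_iff {k l : ℤ} (hkl : k + 3 ≤ l) :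
    (y k = 1 ∧ ∀ m ∈ Icc (k + 1) l, y m = 0) ↔ (x (k - 1) = 1 ∧ ∀ m ∈ Icc k l, x m = 0) := by
  constructor
  · rintro ⟨hyk, hy0⟩
    have hx0 := eq_zero_of_rule156_eq_zero_on_Icc hy hx hkl hy0
    refine ⟨(hx (k - 1)).resolve_left fun hprev => ?_, hx0⟩
    rw [rule156_of_prev_eq_zero hy hprev, hx0 k (by simp; omega)] at hyk
    exact zero_ne_one hyk
  · rintro ⟨hprev, hx0⟩
    refine ⟨rule156_eq_one_of_isolated hy hprev (hx0 k (by simp; omega))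
      (hx0 (k + 1) (by simp; omega)), fun m hm => ?_⟩
    obtain ⟨hkm, hml⟩ := mem_Icc.1 hm
    rw [rule156_of_prev_eq_zero hy (hx0 (m - 1) (mem_Icc.2 ⟨by omega, by omega⟩))]
    exact hx0 m (mem_Icc.2 ⟨by omega, hml⟩)

end Rule156

theorem stmt11 (x : ℤ → ℤ) (hx : ∀ i, x i = 0 ∨ x i = 1)
    (y : ℤ → ℤ) (hy : ∀ i, y i = f156 (x (i - 1)) (x i) (x (i + 1)))
    (n : ℕ) (hn : 2 ≤ n) (j : ℤ) :
    D y n j = D x (n + 1) j := by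
  have hy01 : ∀ i, y i = 0 ∨ y i = 1 := fun i => by
    rw [hy]; exact f156_mem_zero_one (hx _) (hx _) (hx _)
  have hshift : j - ((n + 1 : ℕ) : ℤ) = j - n - 1 := by push_cast; ring
  simp only [D_eq_ite hy01, D_eq_ite hx, hshift, sub_add_cancel]
  simp only [rule156_run_iff hy hx (show j - n + 3 ≤ j + 1 by omega)]
end

section
/- Define S1(x,n,j) = Σ_{k=1}^{n} P(k)·x_{j−k}·x_{j−k+1}·∏_{m=j−k+2}^{j+1}(1−x_m) + Σ_{k=2}^{n} P(k+1)·(1−x_{j−k})·x_{j−k+1}·∏_{m=j−k+2}^{j+1}(1−x_m), where P(k)=1 if k is even and 0 if k is odd. Let x ∈ {0,1}^ℤ and y = F156(x). Then S1(y,n,j) = S1(x,n+1,j) + x_{j−2}·x_{j−1}·x_j·(1−x_{j+1})·x_{j+2} − x_{j−2}·x_{j−1}·(1−x_j)·(1−x_{j+1}). -/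
/-- Even-parity indicator: 1 if k is even, 0 if k is odd. -/
def Par (k : ℕ) : ℤ := if Even k then 1 else 0

/-- Vertical strips under diagonal lines. -/
noncomputable def S1 (x : ℤ → ℤ) (n : ℕ) (j : ℤ) : ℤ :=
  (∑ k ∈ Finset.Icc 1 n,
      Par k * x (j - k) * x (j - k + 1) * ∏ m ∈ Finset.Icc (j - k + 2) (j + 1), (1 - x m)) +
    ∑ k ∈ Finset.Icc 2 n,
      Par (k + 1) * (1 - x (j - k)) * x (j - k + 1) *
        ∏ m ∈ Finset.Icc (j - k + 2) (j + 1), (1 - x m)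

/-!
The `k = 1` summands of `S1` carry the weight `Par 1 = 0`, so `S1 x n j` is the sum of the
strips `strip x k j` for `2 ≤ k ≤ n`. Under rule 156 a cell followed by two zeros copies its
left neighbour, and a `1` followed by a zero negates it. Hence a run of at least three zeros
of `y` ending at `j + 1` is exactly a run of zeros of `x` extended by one cell to the left, and
the strip of `y` of width `k ≥ 3` is the strip of `x` of width `k + 1`: the negation swaps the
two parity weights, which matches the parity shift `k ↦ k + 1`. Only the strip of width `2`
behaves differently; comparing it is a finite check on six cells of `x`, and it produces the
two correction terms.
-/

open Finset

def rule156 (x : ℤ → ℤ) (i : ℤ) : ℤ := f156 (x (i - 1)) (x i) (x (i + 1))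

noncomputable def strip (x : ℤ → ℤ) (k : ℕ) (j : ℤ) : ℤ :=
  (Par k * x (j - k) + Par (k + 1) * (1 - x (j - k))) * x (j - k + 1) *
    ∏ m ∈ Icc (j - k + 2) (j + 1), (1 - x m)

lemma Par_add_two (k : ℕ) : Par (k + 2) = Par k := by
  simp [Par, Nat.even_add]

lemma Int.prod_Icc_eq_mul_prod_Icc_add_one {M : Type*} [CommMonoid M] (f : ℤ → M) {a b : ℤ}
    (h : a ≤ b) : ∏ m ∈ Icc a b, f m = f a * ∏ m ∈ Icc (a + 1) b, f m := by
  rw [Icc_add_one_left_eq_Ioc, mul_prod_Ioc_eq_prod_Icc h]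

lemma S1_one (x : ℤ → ℤ) (j : ℤ) : S1 x 1 j = 0 := by
  simp [S1, Par]

lemma S1_succ (x : ℤ → ℤ) {n : ℕ} (hn : 1 ≤ n) (j : ℤ) :
    S1 x (n + 1) j = S1 x n j + strip x (n + 1) j := by
  rw [S1, S1, sum_Icc_succ_top (by omega), sum_Icc_succ_top (by omega), strip]
  ring

section Binary

variable {a b c d e g : ℤ}

lemma f156_mul_one_sub_mul_one_sub (hb : b = 0 ∨ b = 1) (hc : c = 0 ∨ c = 1) :
    f156 a b c * (1 - b) * (1 - c) = a * (1 - b) * (1 - c) := by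
  rcases hb with rfl | rfl <;> rcases hc with rfl | rfl <;> simp [f156]

lemma f156_mul_mul_one_sub (hb : b = 0 ∨ b = 1) (hc : c = 0 ∨ c = 1) :
    f156 a b c * b * (1 - c) = (1 - a) * b * (1 - c) := by
  rcases hb with rfl | rfl <;> rcases hc with rfl | rfl <;> simp [f156]

lemma one_sub_f156_mul_three (ha : a = 0 ∨ a = 1) (hb : b = 0 ∨ b = 1) (hc : c = 0 ∨ c = 1)
    (hd : d = 0 ∨ d = 1) (he : e = 0 ∨ e = 1) :
    (1 - f156 a b c) * (1 - f156 b c d) * (1 - f156 c d e) =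
      (1 - a) * (1 - b) * (1 - c) * (1 - d) := by
  rcases ha with rfl | rfl <;> rcases hb with rfl | rfl <;> rcases hc with rfl | rfl <;>
    rcases hd with rfl | rfl <;> rcases he with rfl | rfl <;> simp [f156]

lemma f156_window (ha : a = 0 ∨ a = 1) (hb : b = 0 ∨ b = 1) (hc : c = 0 ∨ c = 1)
    (hd : d = 0 ∨ d = 1) (he : e = 0 ∨ e = 1) (hg : g = 0 ∨ g = 1) :
    f156 a b c * f156 b c d * (1 - f156 c d e) * (1 - f156 d e g) =
      (1 - a) * b * (1 - c) * (1 - d) * (1 - e) + b * c * d * (1 - e) * g := by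
  rcases ha with rfl | rfl <;> rcases hb with rfl | rfl <;> rcases hc with rfl | rfl <;>
    rcases hd with rfl | rfl <;> rcases he with rfl | rfl <;> rcases hg with rfl | rfl <;>
    simp [f156]

end Binary

section Rule156

variable {x : ℤ → ℤ} (hx : ∀ i, x i = 0 ∨ x i = 1)
include hx

lemma rule156_mul_one_sub_mul_one_sub (a : ℤ) :
    rule156 x a * (1 - x a) * (1 - x (a + 1)) = x (a - 1) * (1 - x a) * (1 - x (a + 1)) :=
  f156_mul_one_sub_mul_one_sub (hx a) (hx (a + 1))

lemma rule156_mul_mul_one_sub (a : ℤ) :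
    rule156 x a * x a * (1 - x (a + 1)) = (1 - x (a - 1)) * x a * (1 - x (a + 1)) :=
  f156_mul_mul_one_sub (hx a) (hx (a + 1))

lemma prod_one_sub_rule156 {a b : ℤ} (hab : a + 2 ≤ b) :
    ∏ m ∈ Icc a b, (1 - rule156 x m) = (1 - x (a - 1)) * ∏ m ∈ Icc a b, (1 - x m) := by
  induction a, (show a ≤ b - 2 by omega) using Int.leInductionDown with
  | base =>
    have hwin :=
      one_sub_f156_mul_three (hx (b - 3)) (hx (b - 2)) (hx (b - 1)) (hx b) (hx (b + 1))
    simp only [Int.prod_Icc_eq_mul_prod_Icc_add_one _ (show b - 2 ≤ b by omega),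
      Int.prod_Icc_eq_mul_prod_Icc_add_one _ (show b - 2 + 1 ≤ b by omega),
      show b - 2 + 1 + 1 = b by ring, Icc_self, prod_singleton, rule156]
    simp only [show b - 2 - 1 = b - 3 by ring, show b - 2 + 1 = b - 1 by ring,
      show b - 1 - 1 = b - 2 by ring] at hwin ⊢
    linear_combination hwin
  | pred a ha ih =>
    rw [Int.prod_Icc_eq_mul_prod_Icc_add_one _ (by omega), sub_add_cancel, ih (by omega),
      Int.prod_Icc_eq_mul_prod_Icc_add_one (fun m => 1 - x m) (show a - 1 ≤ b by omega),
      sub_add_cancel,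
      Int.prod_Icc_eq_mul_prod_Icc_add_one (fun m => 1 - x m) (show a ≤ b by omega)]
    have h := rule156_mul_one_sub_mul_one_sub hx (a - 1)
    rw [sub_add_cancel] at h
    linear_combination (-∏ m ∈ Icc (a + 1) b, (1 - x m)) * h

lemma rule156_mul_prod_one_sub {a b : ℤ} (hab : a + 3 ≤ b) :
    rule156 x a * ∏ m ∈ Icc (a + 1) b, (1 - rule156 x m) =
      x (a - 1) * ∏ m ∈ Icc a b, (1 - x m) := by
  rw [prod_one_sub_rule156 hx (by omega), add_sub_cancel_right,
    Int.prod_Icc_eq_mul_prod_Icc_add_one (fun m => 1 - x m) (show a ≤ b by omega),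
    Int.prod_Icc_eq_mul_prod_Icc_add_one (fun m => 1 - x m) (show a + 1 ≤ b by omega)]
  linear_combination (∏ m ∈ Icc (a + 1 + 1) b, (1 - x m)) * rule156_mul_one_sub_mul_one_sub hx a

lemma strip_rule156 {k : ℕ} (hk : 3 ≤ k) (j : ℤ) :
    strip (rule156 x) k j = strip x (k + 1) j := by
  have hprod := rule156_mul_prod_one_sub hx (show j - k + 1 + 3 ≤ j + 1 by omega)
  have hcell := rule156_mul_mul_one_sub hx (j - k)
  rw [show j - k + 1 + 1 = j - k + 2 by ring, add_sub_cancel_right] at hprod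
  rw [strip, strip, Par_add_two, Nat.cast_succ, show j - (k + 1 : ℤ) + 2 = j - k + 1 by ring,
    show j - (k + 1 : ℤ) + 1 = j - k by ring, sub_add_eq_sub_sub, mul_assoc _ (rule156 x _),
    hprod,
    Int.prod_Icc_eq_mul_prod_Icc_add_one (fun m => 1 - x m) (show j - k + 1 ≤ j + 1 by omega)]
  linear_combination
    (Par k - Par (k + 1)) * (∏ m ∈ Icc (j - k + 1 + 1) (j + 1), (1 - x m)) * hcell

lemma strip_rule156_two (j : ℤ) :
    strip (rule156 x) 2 j = strip x 2 j + strip x 3 j +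
      x (j - 2) * x (j - 1) * x j * (1 - x (j + 1)) * x (j + 2) -
      x (j - 2) * x (j - 1) * (1 - x j) * (1 - x (j + 1)) := by
  have hwin :=
    f156_window (hx (j - 3)) (hx (j - 2)) (hx (j - 1)) (hx j) (hx (j + 1)) (hx (j + 2))
  rw [strip, strip, strip, show Par 2 = 1 by decide, show Par 3 = 0 by decide,
    show Par 4 = 1 by decide, Nat.cast_ofNat, Nat.cast_ofNat]
  simp only [show j - 2 + 1 = j - 1 by ring, show j - 3 + 1 = j - 2 by ring,
    show j - 3 + 2 = j - 1 by ring,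
    Int.prod_Icc_eq_mul_prod_Icc_add_one _ (show j - 1 ≤ j + 1 by omega), sub_add_cancel,
    Int.prod_Icc_eq_mul_prod_Icc_add_one _ (show j ≤ j + 1 by omega), Icc_self, prod_singleton,
    rule156, show j - 2 - 1 = j - 3 by ring, show j - 1 - 1 = j - 2 by ring,
    show j + 1 - 1 = j by ring, show j + 1 + 1 = j + 2 by ring]
  linear_combination hwin

end Rule156

theorem stmt12 (x : ℤ → ℤ) (hx : ∀ i, x i = 0 ∨ x i = 1)
    (y : ℤ → ℤ) (hy : ∀ i, y i = f156 (x (i - 1)) (x i) (x (i + 1)))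
    (n : ℕ) (hn : 2 ≤ n) (j : ℤ) :
    S1 y n j = S1 x (n + 1) j +
      x (j - 2) * x (j - 1) * x j * (1 - x (j + 1)) * x (j + 2) -
      x (j - 2) * x (j - 1) * (1 - x j) * (1 - x (j + 1)) := by
  obtain rfl : y = rule156 x := funext hy
  induction n, hn using Nat.le_induction with
  | base =>
    rw [S1_succ _ (n := 1) le_rfl, S1_succ _ (n := 2) (by norm_num), S1_succ _ (n := 1) le_rfl,
      S1_one, S1_one, strip_rule156_two hx]
    ring
  | succ n hn ih =>
    rw [S1_succ _ (by omega), S1_succ _ (by omega), ih, strip_rule156 hx (by omega)]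
    ring
end

section
/- Define A(p) = (1/2)·|p(p−1)(2p−1) / ((1+p)(p−2))| for p ∈ [0,1]. Then A attains its maximum on [0,1] exactly at p = φ − √2 and p = 1 − (φ − √2), where φ = (1+√5)/2 is the golden ratio, and the maximum value is (4/3)√2 − (5/6)√5. -/
/-
`A p = |s p|` with `s p = N p / (2 D p)`, where `N p = p (p - 1) (2p - 1)` and
`D p = (1 + p) (2 - p) > 0` on `(-1, 2)`; moreover `s (1 - p) = -s p`. With
`M = (4/3)√2 - (5/6)√5`, `p₀ = φ - √2` and `r = 1/2 + (2/3)√2 - (1/6)√5`, the cubic `2 M D - N`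
factors as `2 (p - p₀)² (r - p)` (`M` is the value for which it acquires a double root), and
`r > 1`. Hence `s ≤ M` on `(-1, 1]` with equality only at `p₀`, and by the symmetry `-s ≤ M`
on `[0, 2)` with equality only at `1 - p₀`.
-/

open Real

/-- Amplitude of density oscillations for rule 156. -/
noncomputable def A (p : ℝ) : ℝ :=
  (1 / 2) * |p * (p - 1) * (2 * p - 1) / ((1 + p) * (p - 2))|

noncomputable def signedAmp (p : ℝ) : ℝ :=
  p * (p - 1) * (2 * p - 1) / (2 * ((1 + p) * (2 - p)))

theorem A_eq_abs_signedAmp (p : ℝ) : A p = |signedAmp p| := by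
  have h : signedAmp p = -(1 / 2 * (p * (p - 1) * (2 * p - 1) / ((1 + p) * (p - 2)))) := by
    rw [signedAmp, ← neg_sub p 2, mul_neg, mul_neg, div_neg, mul_comm (2 : ℝ), ← div_div]
    ring
  rw [h, abs_neg, abs_mul, abs_of_pos (one_half_pos (α := ℝ)), A]

theorem signedAmp_one_sub (p : ℝ) : signedAmp (1 - p) = -signedAmp p := by
  rw [signedAmp, signedAmp, ← neg_div]
  ring_nf

theorem max_mul_denom_sub_numer_eq (p : ℝ) :
    2 * ((4 / 3) * √2 - (5 / 6) * √5) * ((1 + p) * (2 - p)) - p * (p - 1) * (2 * p - 1) =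
      2 * (p - ((1 + √5) / 2 - √2)) ^ 2 * (1 / 2 + (2 / 3) * √2 - (1 / 6) * √5 - p) := by
  have h2 : √2 ^ 2 = 2 := sq_sqrt (by norm_num)
  have h5 : √5 ^ 2 = 5 := sq_sqrt (by norm_num)
  linear_combination (-2 / 3 * p + 1 / 3 + 5 / 3 * √5 - 4 / 3 * √2) * h2
      + (1 / 6 * p - 1 / 12 - 2 / 3 * √2 + 1 / 12 * √5) * h5

theorem one_lt_third_root : 1 < 1 / 2 + (2 / 3) * √2 - (1 / 6) * √5 := by
  have h2 : 1.4 < √2 := by rw [lt_sqrt] <;> norm_num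
  have h5 : √5 < 2.25 := by rw [sqrt_lt'] <;> norm_num
  linarith

theorem max_sub_signedAmp_eq {p : ℝ} (h0 : -1 < p) (h1 : p < 2) :
    (4 / 3) * √2 - (5 / 6) * √5 - signedAmp p =
      (p - ((1 + √5) / 2 - √2)) ^ 2 * (1 / 2 + (2 / 3) * √2 - (1 / 6) * √5 - p) /
        ((1 + p) * (2 - p)) := by
  have hD : 2 * ((1 + p) * (2 - p)) ≠ 0 := by nlinarith
  rw [signedAmp, sub_div' hD, mul_left_comm, ← mul_assoc, max_mul_denom_sub_numer_eq, mul_assoc,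
    mul_div_mul_left _ _ two_ne_zero]

theorem signedAmp_le {p : ℝ} (h0 : -1 < p) (h1 : p ≤ 1) :
    signedAmp p ≤ (4 / 3) * √2 - (5 / 6) * √5 := by
  have hr := one_lt_third_root
  rw [← sub_nonneg, max_sub_signedAmp_eq h0 (by linarith)]
  exact div_nonneg (mul_nonneg (sq_nonneg _) (by linarith)) (by nlinarith)

theorem signedAmp_eq_iff {p : ℝ} (h0 : -1 < p) (h1 : p ≤ 1) :
    signedAmp p = (4 / 3) * √2 - (5 / 6) * √5 ↔ p = (1 + √5) / 2 - √2 := by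
  have hr := one_lt_third_root
  rw [eq_comm, ← sub_eq_zero, max_sub_signedAmp_eq h0 (by linarith)]
  have hD : (1 + p) * (2 - p) ≠ 0 := by nlinarith
  have hrp : 1 / 2 + (2 / 3) * √2 - (1 / 6) * √5 - p ≠ 0 := by linarith
  simp only [div_eq_zero_iff, hD, mul_eq_zero, hrp, pow_eq_zero_iff two_ne_zero, sub_eq_zero,
    or_false]

theorem stmt16 :
    (∀ p ∈ Set.Icc (0 : ℝ) 1, A p ≤ (4 / 3) * Real.sqrt 2 - (5 / 6) * Real.sqrt 5) ∧
      ∀ p ∈ Set.Icc (0 : ℝ) 1,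
        (A p = (4 / 3) * Real.sqrt 2 - (5 / 6) * Real.sqrt 5 ↔
          p = (1 + Real.sqrt 5) / 2 - Real.sqrt 2 ∨
          p = 1 - ((1 + Real.sqrt 5) / 2 - Real.sqrt 2)) := by
  have hM : 0 ≤ (4 / 3) * √2 - (5 / 6) * √5 := by
    simpa [signedAmp] using signedAmp_le (p := 0) (by norm_num) (by norm_num)
  constructor
  · rintro p ⟨h0, h1⟩
    rw [A_eq_abs_signedAmp, abs_le', ← signedAmp_one_sub]
    exact ⟨signedAmp_le (by linarith) h1, signedAmp_le (by linarith) (by linarith)⟩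
  · rintro p ⟨h0, h1⟩
    rw [A_eq_abs_signedAmp, abs_eq hM, ← neg_eq_iff_eq_neg, ← signedAmp_one_sub,
      signedAmp_eq_iff (by linarith) h1, signedAmp_eq_iff (by linarith) (by linarith)]
    exact or_congr_right ⟨fun h => by linarith, fun h => by linarith⟩
end
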